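/- Let p be a prime number, let K = ℚ_p with its standard absolute value (so |p| = 1/p), and let φ = Σ_{n≥1} (−1)^{n−1} X^n/n ∈ ℚ_p⟦X⟧ be the formal power series of log(1+X). Then the supremum of the radii r ∈ (0,1] at which the graph of φ is analytically trivialized equals p^{−1/(p−1)}. (This is the paper's assertion that the size of the graph of log(1+x) over a p-adic field equals |p|^{1/(p−1)}.) -/

import Mathlib

noncomputable section

open Filter PowerSeries

namespace NA

/-- The valuation ring `R = {x : K | ‖x‖ ≤ 1}` of a nonarchimedean normed field. -/
def integers (K : Type*) [NormedField K] [IsUltrametricDist K] : Subring K where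
  carrier := {x : K | ‖x‖ ≤ 1}
  mul_mem' {a b} ha hb := by
    simp only [Set.mem_setOf_eq, norm_mul] at *
    calc ‖a‖ * ‖b‖ ≤ 1 * 1 := mul_le_mul ha hb (norm_nonneg _) zero_le_one
    _ = 1 := one_mul 1
  one_mem' := by simp
  add_mem' {a b} ha hb := (IsUltrametricDist.norm_add_le_max a b).trans (max_le ha hb)
  zero_mem' := by simp
  neg_mem' {a} ha := by simpa using ha

/-- Composition `φ ∘ ψ` of formal power series in one variable
(this gives `φ(ψ)` whenever `ψ` has zero constant term). -/
def comp {K : Type*} [CommSemiring K] (φ ψ : PowerSeries K) : PowerSeries K :=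
  PowerSeries.mk fun n =>
    ∑ k ∈ Finset.range (n + 1), PowerSeries.coeff k φ * PowerSeries.coeff n (ψ ^ k)

/-- The one-variable series `T ↦ f(T, 0)` obtained from a two-variable series `f`. -/
def line1 {K : Type*} [CommSemiring K] (f : MvPowerSeries (Fin 2) K) : PowerSeries K :=
  PowerSeries.mk fun n => MvPowerSeries.coeff (Finsupp.single (0 : Fin 2) n) f

/-- The statement `‖f‖_r ≤ c`, where `‖f‖_r = sup_I ‖a_I‖ r^{|I|}` is the Gauss norm of the
multivariate formal power series `f = Σ_I a_I X^I`. -/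
def NormLE {K : Type*} [NormedField K] {N : ℕ} (r : ℝ) (f : MvPowerSeries (Fin N) K)
    (c : ℝ) : Prop :=
  ∀ I : Fin N →₀ ℕ, ‖MvPowerSeries.coeff I f‖ * r ^ (∑ j, I j) ≤ c

/-- The graph of `φ` is analytically trivialized at radius `r`: there is a pair
`f = (f₁, f₂)` of two-variable power series, vanishing at the origin, with `‖f_j‖_r ≤ r`,
whose Jacobian matrix at the origin lies in `GL₂(R)` (entries of norm `≤ 1`, determinant of
norm `1`), and such that `f₂(T,0) = φ(f₁(T,0))`. -/
def GraphTrivAt {K : Type*} [NormedField K] (φ : PowerSeries K) (r : ℝ) : Prop :=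
  ∃ f₁ f₂ : MvPowerSeries (Fin 2) K,
    MvPowerSeries.constantCoeff f₁ = 0 ∧
    MvPowerSeries.constantCoeff f₂ = 0 ∧
    NormLE r f₁ r ∧ NormLE r f₂ r ∧
    ‖MvPowerSeries.coeff (Finsupp.single (0 : Fin 2) 1) f₁‖ ≤ 1 ∧
    ‖MvPowerSeries.coeff (Finsupp.single (1 : Fin 2) 1) f₁‖ ≤ 1 ∧
    ‖MvPowerSeries.coeff (Finsupp.single (0 : Fin 2) 1) f₂‖ ≤ 1 ∧
    ‖MvPowerSeries.coeff (Finsupp.single (1 : Fin 2) 1) f₂‖ ≤ 1 ∧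
    ‖MvPowerSeries.coeff (Finsupp.single (0 : Fin 2) 1) f₁ *
        MvPowerSeries.coeff (Finsupp.single (1 : Fin 2) 1) f₂ -
      MvPowerSeries.coeff (Finsupp.single (1 : Fin 2) 1) f₁ *
        MvPowerSeries.coeff (Finsupp.single (0 : Fin 2) 1) f₂‖ = 1 ∧
    line1 f₂ = comp φ (line1 f₁)

end NA

/-!
If `φ` has Gauss norm `≤ r` at radius `r`, then `(X₀, X₁ + φ(X₀))` trivializes its graph.
Conversely, over an ultrametric field and when `‖φ₁‖ ≤ 1`, a trivialization `(f₁, f₂)` gives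
`a = f₁(T,0)` with `‖a‖_r ≤ r`, `‖φ(a)‖_r ≤ r` and `‖a₁‖ = 1` (the Jacobian determinant is
`a₁ · (∂f₂/∂X₁ - φ₁ ∂f₁/∂X₁)`). Writing `φ(a)_n = φ_n a₁ⁿ + Σ_{k<n} φ_k (aᵏ)_n`, strong induction
on `n` then gives `‖φ_n‖ rⁿ ≤ r` for all `n`. So the graph is trivialized at `r` exactly when
`‖φ‖_r ≤ r`.

For `φ = log(1+X)` this says `rⁿ⁻¹ ≤ |n|` for all `n ≥ 1`. At `n = p` it forces
`r^{p-1} ≤ 1/p`, and conversely `ρ = p^{-1/(p-1)}` satisfies it because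
`(p-1) v_p(n) + 1 ≤ p^{v_p(n)} ≤ n`.
-/

namespace NA

section Series

variable {K : Type*} [NormedField K]

/-- The one-variable analogue of `NormLE`: `‖a‖_r ≤ c` for the Gauss norm. -/
def SeriesNormLE (r : ℝ) (a : K⟦X⟧) (c : ℝ) : Prop :=
  ∀ n, ‖coeff n a‖ * r ^ n ≤ c

theorem SeriesNormLE.nonneg {r c : ℝ} {a : K⟦X⟧} (h : SeriesNormLE r a c) : 0 ≤ c :=
  le_trans (by simp) (h 0)

theorem seriesNormLE_one (r : ℝ) : SeriesNormLE r (1 : K⟦X⟧) 1 := by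
  intro n
  rcases eq_or_ne n 0 with rfl | hn
  · simp
  · simp [coeff_one, hn]

theorem norm_sub_le_max_norm {E : Type*} [SeminormedAddCommGroup E] [IsUltrametricDist E]
    (x y : E) : ‖x - y‖ ≤ max ‖x‖ ‖y‖ := by
  simpa [sub_eq_add_neg] using IsUltrametricDist.norm_add_le_max x (-y)

variable [IsUltrametricDist K]

theorem norm_sum_mul_le {ι : Type*} {s : Finset ι} {t : ι → K} {w c : ℝ} (hw : 0 ≤ w)
    (hc : 0 ≤ c) (h : ∀ i ∈ s, ‖t i‖ * w ≤ c) : ‖∑ i ∈ s, t i‖ * w ≤ c := by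
  rcases s.eq_empty_or_nonempty with rfl | hs
  · simp [hc]
  obtain ⟨i, hi, hle⟩ := IsUltrametricDist.exists_norm_finsetSum_le_of_nonempty hs t
  exact (mul_le_mul_of_nonneg_right hle hw).trans (h i hi)

theorem SeriesNormLE.mul {r c d : ℝ} {a b : K⟦X⟧} (hr : 0 ≤ r) (ha : SeriesNormLE r a c)
    (hb : SeriesNormLE r b d) : SeriesNormLE r (a * b) (c * d) := by
  intro n
  rw [coeff_mul]
  refine norm_sum_mul_le (by positivity) (mul_nonneg ha.nonneg hb.nonneg) fun ij hij => ?_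
  rw [Finset.HasAntidiagonal.mem_antidiagonal] at hij
  calc ‖coeff ij.1 a * coeff ij.2 b‖ * r ^ n
      = (‖coeff ij.1 a‖ * r ^ ij.1) * (‖coeff ij.2 b‖ * r ^ ij.2) := by
        rw [norm_mul, ← hij, pow_add]; ring
    _ ≤ c * d := mul_le_mul (ha _) (hb _) (by positivity) ha.nonneg

theorem SeriesNormLE.pow {r c : ℝ} {a : K⟦X⟧} (hr : 0 ≤ r) (ha : SeriesNormLE r a c) (k : ℕ) :
    SeriesNormLE r (a ^ k) (c ^ k) := by
  induction k with
  | zero => simpa using seriesNormLE_one r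
  | succ k ih => simpa only [pow_succ] using ih.mul hr ha

end Series

section Comp

variable {R : Type*} [CommSemiring R] {a : R⟦X⟧}

theorem coeff_pow_self (ha : constantCoeff a = 0) (k : ℕ) : coeff k (a ^ k) = coeff 1 a ^ k := by
  obtain ⟨b, rfl⟩ := X_dvd_iff.mpr ha
  rw [mul_pow, coeff_X_pow_mul', if_pos le_rfl, Nat.sub_self, coeff_zero_eq_constantCoeff_apply,
    map_pow, coeff_succ_X_mul, coeff_zero_eq_constantCoeff_apply]

theorem coeff_comp (φ : R⟦X⟧) (ha : constantCoeff a = 0) (n : ℕ) :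
    coeff n (comp φ a) =
      ∑ k ∈ Finset.range n, coeff k φ * coeff n (a ^ k) + coeff n φ * coeff 1 a ^ n := by
  rw [comp, coeff_mk, Finset.sum_range_succ, coeff_pow_self ha]

theorem coeff_one_comp (φ : R⟦X⟧) (ha : constantCoeff a = 0) :
    coeff 1 (comp φ a) = coeff 1 φ * coeff 1 a := by
  simp [coeff_comp φ ha 1, coeff_one]

theorem comp_X (φ : R⟦X⟧) : comp φ X = φ := by
  ext n
  simp [comp, coeff_X_pow]

end Comp

section Graph

variable {K : Type*} [NormedField K] {r c : ℝ}

theorem coeff_line1 (f : MvPowerSeries (Fin 2) K) (n : ℕ) :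
    coeff n (line1 f) = MvPowerSeries.coeff (Finsupp.single 0 n) f :=
  coeff_mk _ _

theorem constantCoeff_line1 (f : MvPowerSeries (Fin 2) K) :
    constantCoeff (line1 f) = MvPowerSeries.constantCoeff f := by
  rw [← coeff_zero_eq_constantCoeff_apply, coeff_line1, Finsupp.single_zero,
    MvPowerSeries.coeff_zero_eq_constantCoeff_apply]

theorem NormLE.line1 {f : MvPowerSeries (Fin 2) K} (h : NormLE r f c) :
    SeriesNormLE r (line1 f) c := by
  intro n
  simpa [coeff_line1] using h (Finsupp.single 0 n)

/-- The series `φ(X₀)` in two variables. -/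
def liftFst (φ : K⟦X⟧) : MvPowerSeries (Fin 2) K :=
  fun I => if I 1 = 0 then coeff (I 0) φ else 0

theorem coeff_liftFst (φ : K⟦X⟧) (I : Fin 2 →₀ ℕ) :
    MvPowerSeries.coeff I (liftFst φ) = if I 1 = 0 then coeff (I 0) φ else 0 :=
  rfl

theorem SeriesNormLE.liftFst {φ : K⟦X⟧} (h : SeriesNormLE r φ c) :
    NormLE r (liftFst φ) c := by
  intro I
  rw [coeff_liftFst]
  split_ifs with hI
  · simpa [Fin.sum_univ_two, hI] using h (I 0)
  · simpa using h.nonneg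

theorem graphTrivAt_of_seriesNormLE {φ : K⟦X⟧} (hr : 0 < r) (hφ0 : constantCoeff φ = 0)
    (hφ : SeriesNormLE r φ r) : GraphTrivAt φ r := by
  have hφ₁ : ‖coeff 1 φ‖ ≤ 1 := le_of_mul_le_mul_right (by simpa using hφ 1) hr
  have hline₁ : line1 (MvPowerSeries.X 0 : MvPowerSeries (Fin 2) K) = X := by
    ext n
    simp [coeff_line1, MvPowerSeries.coeff_X, coeff_X, Finsupp.single_eq_single_iff]
  have hline₂ : line1 (MvPowerSeries.X 1 + liftFst φ) = φ := by
    ext n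
    simp [coeff_line1, coeff_liftFst, MvPowerSeries.coeff_X, Finsupp.single_eq_single_iff]
  have hf₂X : MvPowerSeries.coeff (Finsupp.single 0 1) (MvPowerSeries.X 1 + liftFst φ) =
      coeff 1 φ := by
    rw [← coeff_line1, hline₂]
  have hf₂Y : MvPowerSeries.coeff (Finsupp.single 1 1) (MvPowerSeries.X 1 + liftFst φ) = 1 := by
    simp [coeff_liftFst]
  refine ⟨MvPowerSeries.X 0, MvPowerSeries.X 1 + liftFst φ, by simp, ?_, ?_, ?_, ?_⟩
  · rw [← MvPowerSeries.coeff_zero_eq_constantCoeff_apply, map_add, coeff_liftFst]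
    simp [hφ0]
  · intro I
    rw [MvPowerSeries.coeff_X]
    split_ifs with hI
    · simp [hI]
    · simpa using hr.le
  · intro I
    by_cases hI : I = Finsupp.single 1 1
    · simp [hI, coeff_liftFst]
    · simpa [MvPowerSeries.coeff_X, hI] using hφ.liftFst I
  · simp [MvPowerSeries.coeff_X, Finsupp.single_eq_single_iff, hf₂X, hf₂Y, hφ₁, hline₁, hline₂,
      comp_X]

variable [IsUltrametricDist K]

theorem GraphTrivAt.exists_comp {φ : K⟦X⟧} (h : GraphTrivAt φ r) (hφ₁ : ‖coeff 1 φ‖ ≤ 1) :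
    ∃ a : K⟦X⟧, constantCoeff a = 0 ∧ ‖coeff 1 a‖ = 1 ∧
      SeriesNormLE r a r ∧ SeriesNormLE r (comp φ a) r := by
  obtain ⟨f₁, f₂, hf₁0, -, hf₁, hf₂, hA, hB, -, hD, hdet, hcomp⟩ := h
  have ha0 : constantCoeff (line1 f₁) = 0 := by rw [constantCoeff_line1, hf₁0]
  refine ⟨line1 f₁, ha0, ?_, hf₁.line1, hcomp ▸ hf₂.line1⟩
  have hC : MvPowerSeries.coeff (Finsupp.single 0 1) f₂ =
      coeff 1 φ * MvPowerSeries.coeff (Finsupp.single 0 1) f₁ := by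
    rw [← coeff_line1, hcomp, coeff_one_comp φ ha0, coeff_line1]
  set α := MvPowerSeries.coeff (Finsupp.single 0 1) f₁
  set B := MvPowerSeries.coeff (Finsupp.single 1 1) f₁
  set D := MvPowerSeries.coeff (Finsupp.single 1 1) f₂
  rw [hC, show α * D - B * (coeff 1 φ * α) = α * (D - B * coeff 1 φ) by ring, norm_mul] at hdet
  have hle : ‖D - B * coeff 1 φ‖ ≤ 1 :=
    (norm_sub_le_max_norm _ _).trans
      (max_le hD (by rw [norm_mul]; exact mul_le_one₀ hB (norm_nonneg _) hφ₁))
  rw [coeff_line1]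
  refine le_antisymm hA ?_
  calc 1 = ‖α‖ * ‖D - B * coeff 1 φ‖ := hdet.symm
    _ ≤ ‖α‖ := mul_le_of_le_one_right (norm_nonneg _) hle

theorem SeriesNormLE.of_comp {φ a : K⟦X⟧} (hr : 0 ≤ r) (ha0 : constantCoeff a = 0)
    (ha1 : ‖coeff 1 a‖ = 1) (ha : SeriesNormLE r a r) (hb : SeriesNormLE r (comp φ a) r) :
    SeriesNormLE r φ r := by
  intro n
  refine Nat.strong_induction_on n fun n ih => ?_
  set S := ∑ k ∈ Finset.range n, coeff k φ * coeff n (a ^ k)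
  have hS : ‖S‖ * r ^ n ≤ r := by
    refine norm_sum_mul_le (by positivity) hr fun k hk => ?_
    calc ‖coeff k φ * coeff n (a ^ k)‖ * r ^ n
        = ‖coeff k φ‖ * (‖coeff n (a ^ k)‖ * r ^ n) := by rw [norm_mul, mul_assoc]
      _ ≤ ‖coeff k φ‖ * r ^ k := mul_le_mul_of_nonneg_left (ha.pow hr k n) (norm_nonneg _)
      _ ≤ r := ih k (Finset.mem_range.mp hk)
  have hφn : coeff n φ * coeff 1 a ^ n = coeff n (comp φ a) - S := by
    rw [coeff_comp φ ha0]
    ring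
  calc ‖coeff n φ‖ * r ^ n = ‖coeff n φ * coeff 1 a ^ n‖ * r ^ n := by
        rw [norm_mul, norm_pow, ha1, one_pow, mul_one]
    _ ≤ max ‖coeff n (comp φ a)‖ ‖S‖ * r ^ n := by
        rw [hφn]
        exact mul_le_mul_of_nonneg_right (norm_sub_le_max_norm _ _) (by positivity)
    _ = max (‖coeff n (comp φ a)‖ * r ^ n) (‖S‖ * r ^ n) := max_mul_of_nonneg _ _ (by positivity)
    _ ≤ r := max_le (hb n) hS

theorem graphTrivAt_iff {φ : K⟦X⟧} (hr : 0 < r) (hφ0 : constantCoeff φ = 0)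
    (hφ₁ : ‖coeff 1 φ‖ ≤ 1) : GraphTrivAt φ r ↔ SeriesNormLE r φ r := by
  refine ⟨fun h => ?_, graphTrivAt_of_seriesNormLE hr hφ0⟩
  obtain ⟨a, ha0, ha1, ha, hb⟩ := h.exists_comp hφ₁
  exact ha.of_comp hr.le ha0 ha1 hb

end Graph

section Padic

theorem sub_one_mul_padicValNat_add_one_le (p : ℕ) {n : ℕ} (hn : n ≠ 0) :
    (p - 1) * padicValNat p n + 1 ≤ n := by
  rcases Nat.eq_zero_or_pos p with rfl | hp
  · simpa using Nat.one_le_iff_ne_zero.mpr hn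
  calc (p - 1) * padicValNat p n + 1 = 1 + padicValNat p n * (p - 1) := by ring
    _ ≤ (1 + (p - 1)) ^ padicValNat p n := one_add_le_pow_of_two_add_nonneg (by positivity) _
    _ = p ^ padicValNat p n := by rw [Nat.add_sub_cancel' hp]
    _ ≤ n := Nat.le_of_dvd (Nat.pos_of_ne_zero hn) pow_padicValNat_dvd

theorem rpow_neg_one_div_natCast_pow {x : ℝ} (hx : 0 ≤ x) {n : ℕ} (hn : n ≠ 0) :
    (x ^ (-1 / (n : ℝ))) ^ n = x⁻¹ := by
  rw [← Real.rpow_natCast, ← Real.rpow_mul hx, div_mul_cancel₀ _ (by exact_mod_cast hn),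
    Real.rpow_neg_one]

variable {p : ℕ} [Fact p.Prime]

theorem norm_natCast_eq_inv_pow_padicValNat {n : ℕ} (hn : n ≠ 0) :
    ‖(n : ℚ_[p])‖ = (p : ℝ)⁻¹ ^ padicValNat p n := by
  rw [Padic.norm_eq_zpow_neg_valuation (by exact_mod_cast hn), Padic.valuation_natCast, zpow_neg,
    zpow_natCast, inv_pow]

theorem pow_sub_one_le_norm_natCast {ρ : ℝ} (hρ0 : 0 ≤ ρ) (hρ1 : ρ ≤ 1)
    (hρ : ρ ^ (p - 1) = (p : ℝ)⁻¹) {n : ℕ} (hn : n ≠ 0) : ρ ^ (n - 1) ≤ ‖(n : ℚ_[p])‖ := by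
  have hv := sub_one_mul_padicValNat_add_one_le p hn
  calc ρ ^ (n - 1) ≤ ρ ^ ((p - 1) * padicValNat p n) := pow_le_pow_of_le_one hρ0 hρ1 (by omega)
    _ = ‖(n : ℚ_[p])‖ := by rw [pow_mul, hρ, norm_natCast_eq_inv_pow_padicValNat hn]

theorem seriesNormLE_iff_le_of_norm_coeff_eq_inv {φ : ℚ_[p]⟦X⟧} {r ρ : ℝ} (hr : 0 < r)
    (hρ0 : 0 ≤ ρ) (hρ1 : ρ ≤ 1) (hρ : ρ ^ (p - 1) = (p : ℝ)⁻¹) (hφ0 : constantCoeff φ = 0)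
    (hφ : ∀ n : ℕ, 1 ≤ n → ‖coeff n φ‖ = ‖(n : ℚ_[p])‖⁻¹) :
    SeriesNormLE r φ r ↔ r ≤ ρ := by
  have hp : p.Prime := Fact.out
  constructor
  · intro h
    have hpr : (p : ℝ) * r ^ (p - 1) * r ≤ 1 * r := by
      simpa [hφ p hp.one_le, Padic.norm_p, mul_assoc, pow_sub_one_mul hp.ne_zero] using h p
    have hpr' : r ^ (p - 1) ≤ ρ ^ (p - 1) := by
      rw [hρ, ← one_div, le_div_iff₀ (by exact_mod_cast hp.pos), mul_comm]
      exact le_of_mul_le_mul_right hpr hr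
    exact (pow_le_pow_iff_left₀ hr.le hρ0 (Nat.sub_ne_zero_of_lt hp.one_lt)).mp hpr'
  · intro hrρ n
    rcases Nat.eq_zero_or_pos n with rfl | hn
    · simp [hφ0, hr.le]
    rw [hφ n hn, ← pow_sub_one_mul hn.ne' r, ← mul_assoc]
    refine mul_le_of_le_one_left hr.le ((inv_mul_le_one₀ (norm_pos_iff.mpr ?_)).mpr ?_)
    · exact_mod_cast hn.ne'
    · exact (pow_le_pow_left₀ hr.le hrρ _).trans (pow_sub_one_le_norm_natCast hρ0 hρ1 hρ hn.ne')

end Padic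

end NA

/-- **The size of the graph of `log(1+x)` over `ℚ_p` equals `p^{-1/(p-1)}`**
(Bost–Chambert-Loir): for the formal power series `φ = Σ_{n≥1} (-1)^{n-1} X^n / n` of
`log(1+X)` over the `p`-adic numbers, the supremum of the radii `r ∈ (0,1]` at which the
graph of `φ` is analytically trivialized equals `p^{-1/(p-1)} = |p|^{1/(p-1)}`. -/
theorem size_graph_log_one_add
    {p : ℕ} [Fact p.Prime]
    (φ : PowerSeries ℚ_[p]) (hφ0 : PowerSeries.constantCoeff φ = 0)
    (hφ : ∀ n : ℕ, 1 ≤ n →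
      PowerSeries.coeff n φ = ((-1 : ℚ_[p]) ^ (n - 1)) / (n : ℚ_[p])) :
    sSup {r : ℝ | r ∈ Set.Ioc (0 : ℝ) 1 ∧ NA.GraphTrivAt φ r}
      = (p : ℝ) ^ (-(1 : ℝ) / ((p : ℝ) - 1)) := by
  have hp : p.Prime := Fact.out
  have hp1 : (1 : ℝ) < p := by exact_mod_cast hp.one_lt
  set ρ := (p : ℝ) ^ (-(1 : ℝ) / ((p : ℝ) - 1)) with hρ
  have hρ0 : 0 < ρ := Real.rpow_pos_of_pos (by linarith) _
  have hρ1 : ρ ≤ 1 := Real.rpow_le_one_of_one_le_of_nonpos hp1.le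
    (div_nonpos_of_nonpos_of_nonneg (by norm_num) (by linarith))
  have hρp : ρ ^ (p - 1) = (p : ℝ)⁻¹ := by
    rw [hρ, ← Nat.cast_pred hp.pos]
    exact NA.rpow_neg_one_div_natCast_pow (Nat.cast_nonneg p) (Nat.sub_ne_zero_of_lt hp.one_lt)
  have hnorm (n : ℕ) (hn : 1 ≤ n) : ‖coeff n φ‖ = ‖(n : ℚ_[p])‖⁻¹ := by simp [hφ n hn]
  have htriv (r : ℝ) (hr : 0 < r) : NA.GraphTrivAt φ r ↔ r ≤ ρ :=
    (NA.graphTrivAt_iff hr hφ0 (by simp [hnorm 1 le_rfl])).trans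
      (NA.seriesNormLE_iff_le_of_norm_coeff_eq_inv hr hρ0.le hρ1 hρp hφ0 hnorm)
  have hset : {r : ℝ | r ∈ Set.Ioc 0 1 ∧ NA.GraphTrivAt φ r} = Set.Ioc 0 ρ := by
    ext r
    simp only [Set.mem_ofPred_eq, Set.mem_Ioc]
    exact ⟨fun ⟨⟨hr0, _⟩, h⟩ => ⟨hr0, (htriv r hr0).1 h⟩,
      fun ⟨hr0, hr⟩ => ⟨⟨hr0, hr.trans hρ1⟩, (htriv r hr0).2 hr⟩⟩
  rw [hset, csSup_Ioc hρ0]
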